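/- arXiv:1709.03857 — 3 statements merged into one kernel-verified Lean document; each statement's English description precedes it below -/
import Mathlib

section
/- Let p be a prime, let G be a finite semi-extraspecial p-group, and let N be a proper subgroup of G' (note N is normal in G since G' = Z(G)). Then the quotient group G/N is semi-extraspecial. -/
/-- A finite `p`-group is extraspecial if it is nonabelian, its derived subgroup,
center and Frattini subgroup coincide, and its center has order `p`. -/
def IsExtraspecial (p : ℕ) (G : Type*) [Group G] : Prop :=
  (∃ a b : G, a * b ≠ b * a) ∧
  commutator G = Subgroup.center G ∧
  Subgroup.center G = frattini G ∧
  Nat.card (Subgroup.center G) = p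

/-- A `p`-group is semi-extraspecial if for every subgroup `N` of the center of
index `p` in the center (such subgroups are automatically normal in `G`),
the quotient `G ⧸ N` is extraspecial. -/
def IsSemiExtraspecial (p : ℕ) (G : Type*) [Group G] : Prop :=
  ∀ (N : Subgroup G) [N.Normal], N ≤ Subgroup.center G →
    (N.subgroupOf (Subgroup.center G)).index = p → IsExtraspecial p (G ⧸ N)

/-!
If `M ≤ Z(G)` has index `p` in `Z(G)`, the center of the extraspecial group `G ⧸ M` has
order `p`, so it is the image of `Z(G)`: an element of `G` central modulo `M` is central.
This already gives `G' ≤ Z(G)`, since `G'` maps onto `(G ⧸ M)' = Z(G ⧸ M)`. As `Z(G)` is a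
finite `p`-group and `N < G' ≤ Z(G)`, such an `M` can be chosen above `N`; an element central
modulo `N` is then central modulo `M`, hence central, so `Z(G ⧸ N)` is the image of `Z(G)`.
Consequently an index-`p` subgroup `P` of `Z(G ⧸ N)` pulls back to an index-`p` subgroup `Q`
of `Z(G)`, and `(G ⧸ N) ⧸ P ≅ G ⧸ Q` is extraspecial.
-/

open Subgroup QuotientGroup

theorem Subgroup.normal_of_le_center {G : Type*} [Group G] {H : Subgroup G}
    (h : H ≤ center G) : H.Normal :=
  ⟨fun n hn g => by rwa [(mem_center_iff.mp (h hn) g), mul_inv_cancel_right]⟩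

theorem Subgroup.map_center_le_center_of_surjective {G H : Type*} [Group G] [Group H]
    {f : G →* H} (hf : Function.Surjective f) : (center G).map f ≤ center H := by
  rintro _ ⟨g, hg, rfl⟩
  refine mem_center_iff.mpr fun h => ?_
  obtain ⟨x, rfl⟩ := hf h
  rw [← map_mul, ← map_mul, mem_center_iff.mp hg x]

theorem MulEquiv.map_center {G H : Type*} [Group G] [Group H] (e : G ≃* H) :
    (center G).map e.toMonoidHom = center H := by
  refine le_antisymm (map_center_le_center_of_surjective e.surjective) fun h hh => ?_
  refine ⟨e.symm h, ?_, e.apply_symm_apply h⟩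
  exact map_center_le_center_of_surjective (f := e.symm.toMonoidHom) e.symm.surjective
    (mem_map_of_mem _ hh)

theorem map_commutator_eq_of_surjective {G H : Type*} [Group G] [Group H] {f : G →* H}
    (hf : Function.Surjective f) : (commutator G).map f = commutator H := by
  rw [commutator_def, commutator_def, Subgroup.map_commutator, map_top_of_surjective _ hf]

theorem MulEquiv.map_frattini {G H : Type*} [Group G] [Group H] (e : G ≃* H) :
    (frattini G).map e.toMonoidHom = frattini H := by
  refine le_antisymm (map_le_iff_le_comap.mpr
    (frattini_le_comap_frattini_of_surjective e.surjective)) ?_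
  rw [MulEquiv.toMonoidHom_eq_coe, map_equiv_eq_comap_symm]
  exact frattini_le_comap_frattini_of_surjective e.symm.surjective

theorem IsExtraspecial.of_mulEquiv {p : ℕ} {G H : Type*} [Group G] [Group H] (e : G ≃* H)
    (hG : IsExtraspecial p G) : IsExtraspecial p H := by
  obtain ⟨⟨a, b, hab⟩, hcomm, hfrat, hcard⟩ := hG
  refine ⟨⟨e a, e b, fun h => hab (e.injective (by simpa only [map_mul] using h))⟩,
    ?_, ?_, ?_⟩
  · rw [← map_commutator_eq_of_surjective (f := e.toMonoidHom) e.surjective, hcomm,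
      e.map_center]
  · rw [← e.map_center, hfrat, e.map_frattini]
  · rw [← e.map_center, card_map_of_injective e.injective, hcard]

theorem Subgroup.index_comap_subgroupOf_comap_of_surjective {G H : Type*} [Group G] [Group H]
    {f : G →* H} (hf : Function.Surjective f) (P K : Subgroup H) :
    ((P.comap f).subgroupOf (K.comap f)).index = (P.subgroupOf K).index := by
  rw [← index_comap_of_surjective _ (f.subgroupComap_surjective_of_surjective K hf)]
  rfl

theorem IsPGroup.exists_le_index_eq_prime {p : ℕ} (hp : p.Prime) {G : Type*} [Group G]
    [Finite G] (hG : IsPGroup p G) {H : Subgroup G} (hH : H ≠ ⊤) :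
    ∃ K : Subgroup G, H ≤ K ∧ K.index = p := by
  have := Fact.mk hp
  obtain ⟨n, hn⟩ := hG.exists_card_eq
  obtain ⟨m, hm⟩ := (hG.to_subgroup H).exists_card_eq
  have hmn : m < n := by
    by_contra! h
    refine hH (eq_top_of_card_eq H (le_antisymm (card_le_card_group H) ?_))
    rw [hn, hm]
    exact Nat.pow_le_pow_right hp.pos h
  obtain ⟨K, hK, hHK⟩ := Sylow.exists_subgroup_card_pow_prime_le p (m := n - 1)
    (hn ▸ pow_dvd_pow p (n.sub_le 1)) H hm (by omega)
  refine ⟨K, hHK, Nat.eq_of_mul_eq_mul_right (pow_pos hp.pos (n - 1)) ?_⟩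
  rw [← hK, index_mul_card, hn, hK, ← pow_succ', Nat.sub_add_cancel (by omega)]

theorem IsPGroup.exists_le_le_subgroupOf_index_eq_prime {p : ℕ} (hp : p.Prime) {G : Type*}
    [Group G] [Finite G] (hG : IsPGroup p G) {H L : Subgroup G} (hHL : H < L) :
    ∃ K : Subgroup G, H ≤ K ∧ K ≤ L ∧ (K.subgroupOf L).index = p := by
  have hH : H.subgroupOf L ≠ ⊤ := fun h => hHL.not_ge (subgroupOf_eq_top.mp h)
  obtain ⟨K, hHK, hK⟩ := (hG.to_subgroup L).exists_le_index_eq_prime hp hH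
  refine ⟨K.map L.subtype, ?_, map_subtype_le K, ?_⟩
  · rw [← inf_eq_left.mpr hHL.le, ← subgroupOf_map_subtype]
    exact map_mono hHK
  · rwa [subgroupOf, comap_map_eq_self_of_injective L.subtype_injective]

namespace IsSemiExtraspecial

variable {p : ℕ} {G : Type*} [Group G] [Finite G]

theorem comap_center_quotient (hse : IsSemiExtraspecial p G) {M : Subgroup G} [M.Normal]
    (hM : M ≤ center G) (hidx : (M.subgroupOf (center G)).index = p) :
    (center (G ⧸ M)).comap (mk' M) = center G := by
  have hcard : Nat.card ((center G).map (mk' M)) = p := by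
    rw [← MonoidHom.domRestrict_range, ← index_ker, MonoidHom.ker_domRestrict, ker_mk', hidx]
  have heq : (center G).map (mk' M) = center (G ⧸ M) :=
    eq_of_le_of_card_ge (map_center_le_center_of_surjective (mk'_surjective M))
      (by rw [(hse M hM hidx).2.2.2, hcard])
  rw [← heq, comap_map_mk', sup_eq_right.mpr hM]

theorem commutator_le_center (hp : p.Prime) (hpG : IsPGroup p G) (hse : IsSemiExtraspecial p G)
    [Nontrivial G] : commutator G ≤ center G := by
  have := Fact.mk hp
  have hZ : ⊥ < center G :=
    bot_lt_iff_ne_bot.mpr ((nontrivial_iff_ne_bot _).mp hpG.center_nontrivial)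
  obtain ⟨M, -, hMZ, hidx⟩ := hpG.exists_le_le_subgroupOf_index_eq_prime hp hZ
  have := normal_of_le_center hMZ
  calc commutator G ≤ (commutator (G ⧸ M)).comap (mk' M) :=
        map_le_iff_le_comap.mp (map_commutator_eq_of_surjective (mk'_surjective M)).le
    _ = (center (G ⧸ M)).comap (mk' M) := by rw [(hse M hMZ hidx).2.1]
    _ = center G := hse.comap_center_quotient hMZ hidx

theorem comap_center_quotient_of_le (hse : IsSemiExtraspecial p G) {N M : Subgroup G}
    [N.Normal] [M.Normal] (hNM : N ≤ M) (hM : M ≤ center G)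
    (hidx : (M.subgroupOf (center G)).index = p) :
    (center (G ⧸ N)).comap (mk' N) = center G := by
  refine le_antisymm ?_
    (map_le_iff_le_comap.mp (map_center_le_center_of_surjective (mk'_surjective N)))
  let φ : G ⧸ N →* G ⧸ M := map N M (MonoidHom.id G) hNM
  have hφ : Function.Surjective φ :=
    map_surjective_of_surjective N M (MonoidHom.id G) (mk'_surjective M) hNM
  calc (center (G ⧸ N)).comap (mk' N)
      ≤ ((center (G ⧸ M)).comap φ).comap (mk' N) :=
        comap_mono (map_le_iff_le_comap.mp (map_center_le_center_of_surjective hφ))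
    _ = (center (G ⧸ M)).comap (mk' M) := rfl
    _ = center G := hse.comap_center_quotient hM hidx

end IsSemiExtraspecial

/-- A quotient of a finite semi-extraspecial `p`-group by a proper subgroup of its
derived subgroup (such a subgroup is normal since `G' = Z(G)`) is semi-extraspecial. -/
theorem semiExtraspecial_quotient {p : ℕ} (hp : p.Prime) {G : Type*} [Group G] [Finite G]
    (hpG : IsPGroup p G) (hse : IsSemiExtraspecial p G)
    (N : Subgroup G) [N.Normal] (hN : N < commutator G) :
    IsSemiExtraspecial p (G ⧸ N) := by
  obtain ⟨g, -, hg⟩ := SetLike.exists_of_lt hN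
  have : Nontrivial G := nontrivial_of_ne g 1 fun h => hg (h ▸ N.one_mem)
  have hNZ : N < center G := hN.trans_le (hse.commutator_le_center hp hpG)
  obtain ⟨M, hNM, hMZ, hidx⟩ := hpG.exists_le_le_subgroupOf_index_eq_prime hp hNZ
  have := normal_of_le_center hMZ
  have hZ := hse.comap_center_quotient_of_le hNM hMZ hidx
  intro P _ hPZ hPidx
  have hQZ : P.comap (mk' N) ≤ center G := hZ ▸ comap_mono hPZ
  have hQidx : ((P.comap (mk' N)).subgroupOf (center G)).index = p := by
    rwa [← hZ, index_comap_subgroupOf_comap_of_surjective (mk'_surjective N)]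
  refine (hse _ hQZ hQidx).of_mulEquiv ?_
  exact ((quotientMulEquivOfEq (map_comap_eq_self_of_surjective (mk'_surjective N) P).symm).trans
    (quotientQuotientEquivQuotient N _ (le_comap_mk' N P))).symm
end

section
/- Let p be a prime and let G be a finite semi-extraspecial p-group. Then both the quotient group G/G' and the subgroup G' are elementary abelian p-groups; that is, each is abelian and every element x satisfies x^p = 1. -/
/-- A group is elementary abelian for the prime `p` if it is abelian and every
element `x` satisfies `x ^ p = 1`. -/
def IsElementaryAbelian (p : ℕ) (G : Type*) [Group G] : Prop :=
  (∀ x y : G, x * y = y * x) ∧ ∀ x : G, x ^ p = 1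

/-!
Fix a central subgroup `N` of index `p` in `Z = Z(G)`. The image of `Z` in the extraspecial
group `G/N` is central of order `p`, so it is `Z(G/N) = (G/N)' = Φ(G/N)`. Pulling back gives
`N G' = Z`, and, since `p`-th powers of a `p`-group lie in its Frattini subgroup, `x ^ p ∈ Z` for
all `x`. If `G' < Z`, choosing `N ≥ G'` yields `Z = N G' = N`, absurd; hence `G' = Z`. Then
`G/G' = G/Z` has exponent `p`, and `G'` is generated by central commutators with
`⁅x, y⁆ ^ p = ⁅x ^ p, y⁆ = 1`.
-/

open scoped commutatorElement
open Subgroup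

namespace Subgroup

variable {G : Type*} [Group G]

theorem normal_of_le_center_s3 {N : Subgroup G} (h : N ≤ center G) : N.Normal :=
  ⟨fun n hn g => by rwa [mem_center_iff.mp (h hn) g, mul_inv_cancel_right]⟩

theorem map_center_le_center_of_surjective_s3 {H : Type*} [Group H] {f : G →* H}
    (hf : Function.Surjective f) : (center G).map f ≤ center H := by
  rintro _ ⟨z, hz, rfl⟩
  refine mem_center_iff.mpr fun h => ?_
  obtain ⟨g, rfl⟩ := hf h
  rw [← map_mul, ← map_mul, mem_center_iff.mp hz g]

theorem card_map_mk'_eq_index_subgroupOf (N H : Subgroup G) [N.Normal] :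
    Nat.card (H.map (QuotientGroup.mk' N)) = (N.subgroupOf H).index := by
  have hker : ((QuotientGroup.mk' N).comp H.subtype).ker = N.subgroupOf H := by
    rw [← MonoidHom.comap_ker, QuotientGroup.ker_mk']
    rfl
  rw [← hker, index_ker, MonoidHom.range_comp, range_subtype]

end Subgroup

section ClassTwo

variable {G : Type*} [Group G] {n : ℕ}

theorem commutatorElement_pow_eq_one_of_mem_center {x y : G} (hc : ⁅x, y⁆ ∈ center G)
    (hx : x ^ n ∈ center G) : ⁅x, y⁆ ^ n = 1 := by
  have hconj : x = ⁅x, y⁆ * (y * x * y⁻¹) := by group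
  have hcomm : Commute ⁅x, y⁆ (y * x * y⁻¹) := (mem_center_iff.mp hc _).symm
  have : x ^ n = ⁅x, y⁆ ^ n * x ^ n := calc
    x ^ n = ⁅x, y⁆ ^ n * (y * x * y⁻¹) ^ n := by rw [← hcomm.mul_pow, ← hconj]
    _ = ⁅x, y⁆ ^ n * (y * x ^ n * y⁻¹) := by rw [conj_pow]
    _ = ⁅x, y⁆ ^ n * x ^ n := by rw [mem_center_iff.mp hx y, mul_inv_cancel_right]
  exact right_eq_mul.mp this

theorem pow_eq_one_of_mem_commutator (hc : commutator G ≤ center G)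
    (hpow : ∀ x : G, x ^ n ∈ center G) {g : G} (hg : g ∈ commutator G) : g ^ n = 1 := by
  rw [commutator_eq_closure] at hc hg
  induction hg using closure_induction with
  | mem _ h =>
    obtain ⟨x, y, rfl⟩ := h
    exact commutatorElement_pow_eq_one_of_mem_center (hc (subset_closure ⟨x, y, rfl⟩)) (hpow x)
  | one => exact one_pow n
  | mul a b _ hb ha1 hb1 => rw [Commute.mul_pow (mem_center_iff.mp (hc hb) a), ha1, hb1, one_mul]
  | inv a _ ha1 => rw [inv_pow, ha1, inv_one]

end ClassTwo

namespace IsPGroup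

variable {p : ℕ} [hp : Fact p.Prime] {G : Type*} [Group G] [Finite G]

theorem exists_le_index_eq_prime_s3 (hG : IsPGroup p G) {H : Subgroup G} (hH : H ≠ ⊤) :
    ∃ K : Subgroup G, H ≤ K ∧ K.index = p := by
  obtain ⟨n, hn⟩ := hG.exists_card_eq
  obtain ⟨m, hm⟩ := (hG.to_subgroup H).exists_card_eq
  have hmn : m < n := by
    rw [← Nat.pow_lt_pow_iff_right hp.out.one_lt, ← hm, ← hn, ← H.card_mul_index]
    exact lt_mul_of_one_lt_right Nat.card_pos (one_lt_index_of_ne_top hH)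
  obtain ⟨K, hK, hHK⟩ := Sylow.exists_subgroup_card_pow_prime_le p
    (hn ▸ pow_dvd_pow p (n.sub_le 1)) H hm (Nat.le_sub_one_of_lt hmn)
  refine ⟨K, hHK, Nat.eq_of_mul_eq_mul_left (pow_pos hp.out.pos (n - 1)) ?_⟩
  rw [← pow_succ, Nat.sub_add_cancel (by omega), ← hn, ← K.card_mul_index, hK]

theorem index_eq_of_isCoatom (hG : IsPGroup p G) {M : Subgroup G} (hM : IsCoatom M) :
    M.index = p := by
  obtain ⟨K, hMK, hK⟩ := hG.exists_le_index_eq_prime_s3 hM.1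
  rcases hM.le_iff.mp hMK with rfl | rfl
  · exact absurd (hK.symm.trans index_top) hp.out.ne_one
  · exact hK

theorem pow_mem_frattini (hG : IsPGroup p G) (x : G) : x ^ p ∈ frattini G := by
  refine mem_iInf.mpr fun M => mem_iInf.mpr fun hM => ?_
  have := NormalizerCondition.normal_of_coatom M
    (Group.normalizerCondition_of_isNilpotent (h := hG.isNilpotent)) hM
  simpa only [hG.index_eq_of_isCoatom hM] using M.pow_index_mem x

theorem exists_between_le_center_index_eq_prime (hG : IsPGroup p G) {K : Subgroup G}
    (hK : K ≤ center G) (hne : K ≠ center G) :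
    ∃ N : Subgroup G, K ≤ N ∧ N ≤ center G ∧ (N.subgroupOf (center G)).index = p := by
  have hKtop : K.subgroupOf (center G) ≠ ⊤ := fun h =>
    hne (hK.antisymm (subgroupOf_eq_top.mp h))
  obtain ⟨W, hKW, hW⟩ := (hG.to_subgroup (center G)).exists_le_index_eq_prime_s3 hKtop
  refine ⟨W.map (center G).subtype, fun x hx => ⟨⟨x, hK hx⟩, hKW hx, rfl⟩,
    map_subtype_le W, ?_⟩
  rwa [subgroupOf, comap_map_eq_self_of_injective (center G).subtype_injective]

theorem exists_le_center_index_eq_prime [Nontrivial G] (hG : IsPGroup p G) :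
    ∃ N : Subgroup G, N ≤ center G ∧ (N.subgroupOf (center G)).index = p := by
  obtain ⟨N, -, hN⟩ := hG.exists_between_le_center_index_eq_prime bot_le hG.bot_lt_center.ne
  exact ⟨N, hN⟩

end IsPGroup

section ExtraspecialQuotient

variable {p : ℕ} {G : Type*} [Group G] {N : Subgroup G} [N.Normal]

theorem map_mk'_center_eq_center_of_isExtraspecial [Finite G]
    (hN : (N.subgroupOf (center G)).index = p) (hE : IsExtraspecial p (G ⧸ N)) :
    (center G).map (QuotientGroup.mk' N) = center (G ⧸ N) :=
  eq_of_le_of_card_ge (map_center_le_center_of_surjective_s3 (QuotientGroup.mk'_surjective N))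
    (by rw [hE.2.2.2, card_map_mk'_eq_index_subgroupOf, hN])

theorem sup_commutator_eq_center_of_isExtraspecial [Finite G] (hNZ : N ≤ center G)
    (hN : (N.subgroupOf (center G)).index = p) (hE : IsExtraspecial p (G ⧸ N)) :
    N ⊔ commutator G = center G := by
  have hmap : (commutator G).map (QuotientGroup.mk' N) = (center G).map (QuotientGroup.mk' N) := by
    rw [map_mk'_center_eq_center_of_isExtraspecial hN hE, ← hE.2.1, commutator_def,
      commutator_def, map_commutator, map_top_of_surjective _ (QuotientGroup.mk'_surjective N)]
  have := congrArg (comap (QuotientGroup.mk' N)) hmap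
  rwa [QuotientGroup.comap_map_mk', QuotientGroup.comap_map_mk', sup_eq_right.mpr hNZ] at this

theorem pow_mem_center_of_isExtraspecial [Fact p.Prime] [Finite G] (hG : IsPGroup p G)
    (hNZ : N ≤ center G) (hN : (N.subgroupOf (center G)).index = p)
    (hE : IsExtraspecial p (G ⧸ N)) (x : G) : x ^ p ∈ center G := by
  have hx := (hG.to_quotient N).pow_mem_frattini (x : G ⧸ N)
  rw [← hE.2.2.1, ← map_mk'_center_eq_center_of_isExtraspecial hN hE] at hx
  have : x ^ p ∈ ((center G).map (QuotientGroup.mk' N)).comap (QuotientGroup.mk' N) := hx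
  rwa [QuotientGroup.comap_map_mk', sup_eq_right.mpr hNZ] at this

end ExtraspecialQuotient

namespace IsSemiExtraspecial

variable {p : ℕ} [hp : Fact p.Prime] {G : Type*} [Group G] [Finite G] [Nontrivial G]

theorem commutator_eq_center (hG : IsPGroup p G) (hse : IsSemiExtraspecial p G) :
    commutator G = center G := by
  have hle : commutator G ≤ center G := by
    obtain ⟨N, hNZ, hN⟩ := hG.exists_le_center_index_eq_prime
    have := normal_of_le_center_s3 hNZ
    exact sup_commutator_eq_center_of_isExtraspecial hNZ hN (hse N hNZ hN) ▸ le_sup_right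
  by_contra hne
  obtain ⟨N, hGN, hNZ, hN⟩ := hG.exists_between_le_center_index_eq_prime hle hne
  have := normal_of_le_center_s3 hNZ
  have hsup := sup_commutator_eq_center_of_isExtraspecial hNZ hN (hse N hNZ hN)
  have hNeq : N = center G := hNZ.antisymm (hsup ▸ sup_le le_rfl hGN)
  rw [hNeq, subgroupOf_self, index_top] at hN
  exact hp.out.one_lt.ne hN

theorem pow_mem_center (hG : IsPGroup p G) (hse : IsSemiExtraspecial p G) (x : G) :
    x ^ p ∈ center G := by
  obtain ⟨N, hNZ, hN⟩ := hG.exists_le_center_index_eq_prime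
  have := normal_of_le_center_s3 hNZ
  exact pow_mem_center_of_isExtraspecial hG hNZ hN (hse N hNZ hN) x

end IsSemiExtraspecial

theorem IsElementaryAbelian.of_subsingleton {p : ℕ} {G : Type*} [Group G] [Subsingleton G] :
    IsElementaryAbelian p G :=
  ⟨fun _ _ => Subsingleton.elim _ _, fun _ => Subsingleton.elim _ _⟩

/-- If `G` is a finite semi-extraspecial `p`-group, then `G ⧸ G'` and `G'` are both
elementary abelian `p`-groups. -/
theorem semiExtraspecial_elementaryAbelian {p : ℕ} (hp : p.Prime) {G : Type*} [Group G]
    [Finite G] (hpG : IsPGroup p G) (hse : IsSemiExtraspecial p G) :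
    IsElementaryAbelian p (G ⧸ commutator G) ∧ IsElementaryAbelian p (commutator G) := by
  rcases subsingleton_or_nontrivial G with _ | _
  · exact ⟨.of_subsingleton, .of_subsingleton⟩
  have : Fact p.Prime := ⟨hp⟩
  have hcz := hse.commutator_eq_center hpG
  have hpow := hse.pow_mem_center hpG
  -- `Abelianization G` is by definition `G ⧸ commutator G`.
  refine ⟨⟨fun x y => mul_comm (G := Abelianization G) x y, ?_⟩, ⟨?_, ?_⟩⟩
  · rintro ⟨x⟩
    exact (QuotientGroup.eq_one_iff _).mpr (hcz ▸ hpow x)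
  · exact fun x y => Subtype.ext (mem_center_iff.mp (hcz.le y.2) x)
  · exact fun g => Subtype.ext (pow_eq_one_of_mem_commutator hcz.le hpow g.2)
end

section
/- Let (F,+,*) be a commutative semifield of order p^a for a prime p, and suppose the middle seminucleus Mid(F) = {z ∈ F : x*(z*y) = (x*z)*y for all x,y ∈ F} has order p^h. Then the number of abelian subgroups of the semifield group G(F) of order |F|^2 equals 1 + p^h. -/
/-- A (finite) pre-semifield structure on an additive abelian group `F`: a
multiplication satisfying both distributive laws and having no zero divisors.
(Finiteness and nontriviality of `F` are imposed as hypotheses where needed.) -/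
structure PreSemifield (F : Type*) [AddCommGroup F] where
  mul : F → F → F
  add_mul : ∀ a b c : F, mul (a + b) c = mul a c + mul b c
  mul_add : ∀ a b c : F, mul a (b + c) = mul a b + mul a c
  eq_zero_or_eq_zero_of_mul_eq_zero : ∀ a b : F, mul a b = 0 → a = 0 ∨ b = 0

namespace PreSemifield

variable {F : Type*} [AddCommGroup F] (S : PreSemifield F)

theorem mul_zero (a : F) : S.mul a 0 = 0 := by
  have h := S.mul_add a 0 0
  rw [add_zero] at h
  exact left_eq_add.mp h

theorem zero_mul (b : F) : S.mul 0 b = 0 := by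
  have h := S.add_mul 0 0 b
  rw [add_zero] at h
  exact left_eq_add.mp h

theorem mul_neg (a b : F) : S.mul a (-b) = -S.mul a b := by
  have h := S.mul_add a b (-b)
  rw [add_neg_cancel, S.mul_zero] at h
  linear_combination (norm := abel) -h

theorem neg_mul (a b : F) : S.mul (-a) b = -S.mul a b := by
  have h := S.add_mul a (-a) b
  rw [add_neg_cancel, S.zero_mul] at h
  linear_combination (norm := abel) -h

end PreSemifield

/-- The semifield group `G(F)` of a pre-semifield `F`: the set `F × F × F` with
multiplication `(a₁,b₁,c₁) ⬝ (a₂,b₂,c₂) = (a₁+a₂, b₁+b₂, c₁+c₂+a₁*b₂)`. -/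
def SemifieldGroup {F : Type*} [AddCommGroup F] (_S : PreSemifield F) : Type _ :=
  F × F × F

namespace SemifieldGroup

variable {F : Type*} [AddCommGroup F] (S : PreSemifield F)

instance : Group (SemifieldGroup S) where
  mul x y := (x.1 + y.1, x.2.1 + y.2.1, x.2.2 + y.2.2 + S.mul x.1 y.2.1)
  one := ((0 : F), (0 : F), (0 : F))
  inv x := (-x.1, -x.2.1, -x.2.2 + S.mul x.1 x.2.1)
  mul_assoc x y z := by
    show ((_ : F), (_ : F), (_ : F)) = ((_ : F), (_ : F), (_ : F))
    refine Prod.ext (add_assoc _ _ _) (Prod.ext (add_assoc _ _ _) ?_)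
    show x.2.2 + y.2.2 + S.mul x.1 y.2.1 + z.2.2 + S.mul (x.1 + y.1) z.2.1 =
      x.2.2 + (y.2.2 + z.2.2 + S.mul y.1 z.2.1) + S.mul x.1 (y.2.1 + z.2.1)
    rw [S.add_mul, S.mul_add]
    abel
  one_mul x := by
    show ((_ : F), (_ : F), (_ : F)) = x
    refine Prod.ext (zero_add _) (Prod.ext (zero_add _) ?_)
    show 0 + x.2.2 + S.mul 0 x.2.1 = x.2.2
    rw [S.zero_mul, zero_add, add_zero]
  mul_one x := by
    show ((_ : F), (_ : F), (_ : F)) = x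
    refine Prod.ext (add_zero _) (Prod.ext (add_zero _) ?_)
    show x.2.2 + 0 + S.mul x.1 0 = x.2.2
    rw [S.mul_zero, add_zero, add_zero]
  inv_mul_cancel x := by
    show ((_ : F), (_ : F), (_ : F)) = ((0 : F), (0 : F), (0 : F))
    refine Prod.ext (neg_add_cancel _) (Prod.ext (neg_add_cancel _) ?_)
    show -x.2.2 + S.mul x.1 x.2.1 + x.2.2 + S.mul (-x.1) x.2.1 = 0
    rw [S.neg_mul]
    abel

instance [Finite F] : Finite (SemifieldGroup S) :=
  inferInstanceAs (Finite (F × F × F))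

end SemifieldGroup

/-! An abelian subgroup of `G(F)` of order `|F|²` not contained in the vertical subgroup
`{(0, b, c)}` contains some `(w, *, *)` with `w ≠ 0`; commuting with it pins down the second
coordinate by the first, so the first and third coordinates are free and every first coordinate
occurs.  Commuting with the element whose first coordinate is `1` then forces the subgroup to be
the graph `{(a, z * a, c)}` of a multiplication, and commutativity of the whole graph says exactly
that `z` lies in the middle seminucleus. -/

namespace PreSemifield

variable {F : Type*} [AddCommGroup F] (S : PreSemifield F)

def mid : Set F := {z | ∀ x y : F, S.mul x (S.mul z y) = S.mul (S.mul x z) y}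

theorem mul_left_injective {a : F} (ha : a ≠ 0) : Function.Injective (S.mul a) := by
  intro x y hxy
  have hsub : S.mul a (x - y) = 0 := by
    rw [sub_eq_add_neg, S.mul_add, S.mul_neg, hxy, add_neg_cancel]
  exact sub_eq_zero.mp ((S.eq_zero_or_eq_zero_of_mul_eq_zero _ _ hsub).resolve_left ha)

end PreSemifield

namespace SemifieldGroup

variable {F : Type*} [AddCommGroup F] {S : PreSemifield F}

theorem commute_iff {x y : SemifieldGroup S} :
    x * y = y * x ↔ S.mul x.1 y.2.1 = S.mul y.1 x.2.1 := by
  change ((_, _, _) : F × F × F) = (_, _, _) ↔ _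
  simp only [Prod.mk.injEq, add_comm x.1, add_comm x.2.1, add_comm x.2.2, true_and,
    add_right_inj]

theorem mul_fst_snd_eq_of_mem {A : Subgroup (SemifieldGroup S)} [IsMulCommutative A]
    {x y : SemifieldGroup S} (hx : x ∈ A) (hy : y ∈ A) : S.mul x.1 y.2.1 = S.mul y.1 x.2.1 :=
  commute_iff.mp (setLike_mul_comm hx hy)

variable (S)

def vertical : Subgroup (SemifieldGroup S) where
  carrier := {g | g.1 = 0}
  one_mem' := rfl
  mul_mem' {x y} (hx : x.1 = 0) (hy : y.1 = 0) := show x.1 + y.1 = 0 by rw [hx, hy, add_zero]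
  inv_mem' {x} (hx : x.1 = 0) := show -x.1 = 0 by rw [hx, neg_zero]

def graph (z : F) : Subgroup (SemifieldGroup S) where
  carrier := {g | g.2.1 = S.mul z g.1}
  one_mem' := (S.mul_zero z).symm
  mul_mem' {x y} (hx : x.2.1 = S.mul z x.1) (hy : y.2.1 = S.mul z y.1) :=
    show x.2.1 + y.2.1 = S.mul z (x.1 + y.1) by rw [S.mul_add, hx, hy]
  inv_mem' {x} (hx : x.2.1 = S.mul z x.1) := show -x.2.1 = S.mul z (-x.1) by rw [S.mul_neg, hx]

variable {S}

theorem mem_vertical {g : SemifieldGroup S} : g ∈ vertical S ↔ g.1 = 0 := Iff.rfl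

theorem mem_graph {z : F} {g : SemifieldGroup S} : g ∈ graph S z ↔ g.2.1 = S.mul z g.1 :=
  Iff.rfl

variable (S)

theorem card_vertical : Nat.card (vertical S) = Nat.card F ^ 2 := by
  rw [sq, ← Nat.card_prod]
  exact Nat.card_congr
    { toFun g := (g.1.2.1, g.1.2.2)
      invFun b := ⟨((0 : F), b.1, b.2), rfl⟩
      left_inv g := Subtype.ext (Prod.ext g.2.symm rfl)
      right_inv _ := rfl }

theorem card_graph (z : F) : Nat.card (graph S z) = Nat.card F ^ 2 := by
  rw [sq, ← Nat.card_prod]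
  exact Nat.card_congr
    { toFun g := (g.1.1, g.1.2.2)
      invFun a := ⟨(a.1, S.mul z a.1, a.2), rfl⟩
      left_inv g := Subtype.ext (Prod.ext rfl (Prod.ext g.2.symm rfl))
      right_inv _ := rfl }

instance : IsMulCommutative (vertical S) :=
  ⟨⟨fun x y => Subtype.ext <| commute_iff.mpr <| by
    rw [mem_vertical.mp x.2, mem_vertical.mp y.2, S.zero_mul, S.zero_mul]⟩⟩

theorem isMulCommutative_graph (hcomm : ∀ a b : F, S.mul a b = S.mul b a) {z : F}
    (hz : z ∈ S.mid) : IsMulCommutative (graph S z) :=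
  ⟨⟨fun x y => Subtype.ext <| commute_iff.mpr <| by
    rw [mem_graph.mp x.2, mem_graph.mp y.2, hz, hcomm _ y.1.1, hcomm x.1.1]⟩⟩

theorem vertical_ne_graph [Nontrivial F] (z : F) : vertical S ≠ graph S z := by
  obtain ⟨b, hb⟩ := exists_ne (0 : F)
  intro h
  have hmem : ((0, b, 0) : F × F × F) ∈ graph S z := h ▸ mem_vertical.mpr rfl
  exact hb ((mem_graph.mp hmem).trans (S.mul_zero z))

theorem graph_injective {e : F} (he : ∀ x : F, S.mul x e = x) :
    Function.Injective (graph S) := by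
  intro z w h
  have hmem : ((e, S.mul z e, 0) : F × F × F) ∈ graph S w := h ▸ mem_graph.mpr rfl
  rw [← he z, ← he w]
  exact mem_graph.mp hmem

variable {S}

theorem exists_mem_fst_eq [Finite F] {A : Subgroup (SemifieldGroup S)} [IsMulCommutative A]
    (hA : Nat.card A = Nat.card F ^ 2) {w : SemifieldGroup S} (hwA : w ∈ A) (hw : w.1 ≠ 0)
    (a : F) : ∃ g ∈ A, g.1 = a := by
  let φ : A → F × F := fun g => (g.1.1, g.1.2.2)
  have hφ : Function.Injective φ := by
    intro g g' hgg'
    obtain ⟨h1, h3⟩ := Prod.ext_iff.mp hgg'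
    have h2 : g.1.2.1 = g'.1.2.1 := S.mul_left_injective hw <| by
      rw [mul_fst_snd_eq_of_mem hwA g.2, mul_fst_snd_eq_of_mem hwA g'.2, h1]
    exact Subtype.ext (Prod.ext h1 (Prod.ext h2 h3))
  obtain ⟨g, hg⟩ := (hφ.bijective_of_nat_card_le (by rw [hA, Nat.card_prod, sq])).2 (a, 0)
  exact ⟨g, g.2, congrArg Prod.fst hg⟩

theorem le_graph (hcomm : ∀ a b : F, S.mul a b = S.mul b a) {e : F}
    (he : ∀ x : F, S.mul e x = x) {A : Subgroup (SemifieldGroup S)} [IsMulCommutative A]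
    {g₀ : SemifieldGroup S} (hg₀A : g₀ ∈ A) (hg₀ : g₀.1 = e) : A ≤ graph S g₀.2.1 := by
  intro g hg
  rw [mem_graph, ← he g.2.1, ← hg₀, mul_fst_snd_eq_of_mem hg₀A hg, hcomm]

theorem mem_mid_of_le_graph (hcomm : ∀ a b : F, S.mul a b = S.mul b a)
    {A : Subgroup (SemifieldGroup S)} [IsMulCommutative A] (hfst : ∀ a : F, ∃ g ∈ A, g.1 = a)
    {z : F} (hAz : A ≤ graph S z) : z ∈ S.mid := by
  intro x y
  obtain ⟨gx, hgxA, rfl⟩ := hfst x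
  obtain ⟨gy, hgyA, rfl⟩ := hfst y
  have hxy := mul_fst_snd_eq_of_mem hgxA hgyA
  rw [mem_graph.mp (hAz hgxA), mem_graph.mp (hAz hgyA)] at hxy
  rw [hxy, hcomm gy.1, hcomm z]

theorem eq_vertical_or_eq_graph [Finite F] (hcomm : ∀ a b : F, S.mul a b = S.mul b a)
    {e : F} (he : ∀ x : F, S.mul e x = x) (A : Subgroup (SemifieldGroup S))
    [IsMulCommutative A] (hA : Nat.card A = Nat.card F ^ 2) :
    A = vertical S ∨ ∃ z ∈ S.mid, graph S z = A := by
  by_cases hvert : A ≤ vertical S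
  · exact Or.inl (Subgroup.eq_of_le_of_card_ge hvert (by rw [hA, card_vertical]))
  obtain ⟨w, hwA, hw⟩ := SetLike.not_le_iff_exists.mp hvert
  have hfst := exists_mem_fst_eq hA hwA hw
  obtain ⟨g₀, hg₀A, hg₀⟩ := hfst e
  have hle := le_graph hcomm he hg₀A hg₀
  exact Or.inr ⟨_, mem_mid_of_le_graph hcomm hfst hle,
    (Subgroup.eq_of_le_of_card_ge hle (by rw [hA, card_graph])).symm⟩

theorem card_abelian_subgroups [Finite F] [Nontrivial F]
    (hcomm : ∀ a b : F, S.mul a b = S.mul b a) {e : F}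
    (he : ∀ x : F, S.mul e x = x ∧ S.mul x e = x) :
    Nat.card {A : Subgroup (SemifieldGroup S) // IsMulCommutative A ∧
      Nat.card A = Nat.card F ^ 2} = 1 + Nat.card S.mid := by
  have hset : {A : Subgroup (SemifieldGroup S) | IsMulCommutative A ∧
      Nat.card A = Nat.card F ^ 2} = insert (vertical S) (graph S '' S.mid) := by
    ext A
    constructor
    · rintro ⟨hAc, hA⟩
      exact eq_vertical_or_eq_graph hcomm (fun x => (he x).1) A hA
    · rintro (rfl | ⟨z, hz, rfl⟩)
      · exact ⟨inferInstance, card_vertical S⟩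
      · exact ⟨isMulCommutative_graph S hcomm hz, card_graph S z⟩
  have hnotmem : vertical S ∉ graph S '' S.mid := fun ⟨z, _, hz⟩ => vertical_ne_graph S z hz.symm
  rw [Nat.card_coe_set_eq S.mid, add_comm,
    ← Set.ncard_image_of_injective _ (graph_injective S fun x => (he x).2),
    ← Set.ncard_insert_of_notMem hnotmem, ← hset]
  exact Nat.card_coe_set_eq _

end SemifieldGroup

/-- (Verardi; Hiramine; Knarr–Stroppel) Let `F` be a commutative semifield of order
`p ^ a` (a commutative pre-semifield with a two-sided multiplicative identity), and
suppose its middle seminucleus `Mid(F) = {z : x*(z*y) = (x*z)*y for all x, y}` has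
order `p ^ h`.  Then the number of abelian subgroups of the semifield group `G(F)`
of order `|F| ^ 2` is `1 + p ^ h`. -/
theorem semifieldGroup_count_abelian_of_commutative {F : Type*} [AddCommGroup F]
    [Finite F] (S : PreSemifield F) (hcomm : ∀ a b : F, S.mul a b = S.mul b a)
    (e : F) (he : ∀ x : F, S.mul e x = x ∧ S.mul x e = x)
    (p a h : ℕ) (hp : p.Prime) (ha : 0 < a) (hFcard : Nat.card F = p ^ a)
    (hmid : Nat.card {z : F // ∀ x y : F, S.mul x (S.mul z y) = S.mul (S.mul x z) y} =
      p ^ h) :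
    Nat.card {A : Subgroup (SemifieldGroup S) // IsMulCommutative A ∧
      Nat.card A = Nat.card F ^ 2} = 1 + p ^ h := by
  have : Nontrivial F :=
    Finite.one_lt_card_iff_nontrivial.mp (hFcard ▸ Nat.one_lt_pow ha.ne' hp.one_lt)
  rw [SemifieldGroup.card_abelian_subgroups hcomm he]
  exact congrArg (1 + ·) hmid
end
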